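/- arXiv:2308.13986 — 2 statements merged into one kernel-verified Lean document; each statement's English description precedes it below -/
import Mathlib

section
/- Let V be a finite-dimensional real inner product space of dimension n ≥ 1, let T : V → V be a self-adjoint linear map, and let (u_1, …, u_n) be an orthonormal basis of V with T u_i = λ_i u_i and λ_1 ≤ λ_2 ≤ … ≤ λ_n. Fix 1 ≤ k ≤ n and β ≥ 0, and for u ≠ 0 define the penalized Rayleigh quotient L_k(u) = ⟨T u, u⟩/‖u‖² + β Σ_{j=1}^{k−1} ⟨u, u_j⟩²/‖u‖². Then the infimum of L_k(u) over all nonzero u ∈ V equals min(λ_k, λ_1 + β). -/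
/-!
Expanding in the eigenbasis, `⟨T v, v⟩ = ∑ ev i * ⟨v, b i⟩²` and `‖v‖² = ∑ ⟨v, b i⟩²`, so the
penalized quotient is a weighted average of the weights `ev i + β * [i < k]` and its infimum is
the least weight, attained at a basis vector. Monotonicity of `ev` makes that least weight
`ev k` among `i ≥ k` and `ev 0 + β` among `i < k`.
-/

open Finset
open scoped RealInnerProductSpace

namespace OrthonormalBasis

variable {ι V : Type*} [Fintype ι] [NormedAddCommGroup V] [InnerProductSpace ℝ V]
  (b : OrthonormalBasis ι ℝ V)

theorem inner_apply_self_eq_sum_of_apply_eq_smul {T : V →ₗ[ℝ] V} {ev : ι → ℝ}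
    (heig : ∀ i, T (b i) = ev i • b i) (v : V) :
    ⟪T v, v⟫ = ∑ i, ev i * ⟪v, b i⟫ ^ 2 := by
  nth_rewrite 1 [← b.sum_repr' v]
  simp only [map_sum, map_smul, heig, smul_smul, sum_inner, real_inner_smul_left,
    real_inner_comm (b _) v]
  exact sum_congr rfl fun i _ => by ring

theorem isLeast_sum_mul_inner_sq_div_norm_sq (w : ι → ℝ) {m : ℝ} (hle : ∀ i, m ≤ w i)
    {j : ι} (hj : w j = m) :
    IsLeast {r | ∃ v : V, v ≠ 0 ∧ r = (∑ i, w i * ⟪v, b i⟫ ^ 2) / ‖v‖ ^ 2} m := by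
  refine ⟨⟨b j, b.orthonormal.ne_zero j, ?_⟩, ?_⟩
  · classical
    simp [b.inner_eq_ite, hj]
  · rintro r ⟨v, hv, rfl⟩
    rw [le_div_iff₀ (by positivity), ← b.sum_sq_inner_left, mul_sum]
    exact sum_le_sum fun i _ => mul_le_mul_of_nonneg_right (hle i) (sq_nonneg _)

end OrthonormalBasis

section PenalizedWeight

variable {ι : Type*} [LinearOrder ι]

def penalizedWeight (ev : ι → ℝ) (k : ι) (β : ℝ) (i : ι) : ℝ := ev i + if i < k then β else 0

variable {ev : ι → ℝ} {k i₀ : ι} {β : ℝ}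

theorem min_le_penalizedWeight (hmono : Monotone ev) (hbot : ∀ i, i₀ ≤ i) (i : ι) :
    min (ev k) (ev i₀ + β) ≤ penalizedWeight ev k β i := by
  unfold penalizedWeight
  split_ifs with hik
  · exact (min_le_right _ _).trans (add_le_add_left (hmono (hbot i)) β)
  · exact (min_le_left _ _).trans (by simpa using hmono (not_lt.mp hik))

theorem exists_penalizedWeight_eq_min (hβ : 0 ≤ β) (hbot : ∀ i, i₀ ≤ i) :
    ∃ j, penalizedWeight ev k β j = min (ev k) (ev i₀ + β) := by
  rcases le_or_gt (ev k) (ev i₀ + β) with hk | hk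
  · exact ⟨k, by simp [penalizedWeight, hk]⟩
  · have hi₀k : i₀ < k := (hbot k).lt_of_ne <| by rintro rfl; linarith
    exact ⟨i₀, by simp [penalizedWeight, hi₀k, hk.le]⟩

end PenalizedWeight

theorem penalized_rayleigh_quotient_inf_general
    {V : Type*} [NormedAddCommGroup V] [InnerProductSpace ℝ V]
    (n : ℕ) (hn : 0 < n)
    (T : V →ₗ[ℝ] V)
    (b : OrthonormalBasis (Fin n) ℝ V) (ev : Fin n → ℝ)
    (heig : ∀ i, T (b i) = ev i • b i) (hmono : Monotone ev)
    (k : Fin n) (β : ℝ) (hβ : 0 ≤ β)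
    (L : V → ℝ)
    (hL : ∀ v, L v = (inner ℝ (T v) v : ℝ) / ‖v‖ ^ 2
        + β * ∑ j ∈ Finset.Iio k, (inner ℝ v (b j) : ℝ) ^ 2 / ‖v‖ ^ 2) :
    IsGLB {r : ℝ | ∃ v : V, v ≠ 0 ∧ r = L v} (min (ev k) (ev ⟨0, hn⟩ + β)) := by
  have hbot : ∀ i : Fin n, ⟨0, hn⟩ ≤ i := fun _ => Nat.zero_le _
  have hLw : ∀ v, L v = (∑ i, penalizedWeight ev k β i * ⟪v, b i⟫ ^ 2) / ‖v‖ ^ 2 := by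
    intro v
    rw [hL, b.inner_apply_self_eq_sum_of_apply_eq_smul heig, ← filter_gt_eq_Iio]
    simp only [penalizedWeight, add_mul, ite_mul, zero_mul, sum_add_distrib, sum_filter,
      mul_sum, add_div, sum_div, mul_div_assoc, mul_ite, mul_zero, ite_div, zero_div]
  obtain ⟨j, hj⟩ := exists_penalizedWeight_eq_min hβ hbot (ev := ev) (k := k)
  simp only [hLw]
  exact (b.isLeast_sum_mul_inner_sq_div_norm_sq _ (min_le_penalizedWeight hmono hbot) hj).isGLB

/-- For a self-adjoint operator `T` with orthonormal eigenbasis `b` and increasing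
eigenvalues `ev`, the infimum over nonzero vectors of the penalized Rayleigh quotient
`L_k(v) = ⟨Tv,v⟩/‖v‖² + β ∑_{j<k} ⟨v, b j⟩²/‖v‖²` (with penalty `β ≥ 0`) equals
`min (ev k) (ev 0 + β)`. -/
theorem penalized_rayleigh_quotient_inf
    {V : Type*} [NormedAddCommGroup V] [InnerProductSpace ℝ V]
    [FiniteDimensional ℝ V]
    (n : ℕ) (hn : 0 < n) (hdim : Module.finrank ℝ V = n)
    (T : V →ₗ[ℝ] V)
    (hT : ∀ w v : V, (inner ℝ (T w) v : ℝ) = (inner ℝ w (T v) : ℝ))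
    (b : OrthonormalBasis (Fin n) ℝ V) (ev : Fin n → ℝ)
    (heig : ∀ i, T (b i) = ev i • b i) (hmono : Monotone ev)
    (k : Fin n) (β : ℝ) (hβ : 0 ≤ β)
    (L : V → ℝ)
    (hL : ∀ v, L v = (inner ℝ (T v) v : ℝ) / ‖v‖ ^ 2
        + β * ∑ j ∈ Finset.Iio k, (inner ℝ v (b j) : ℝ) ^ 2 / ‖v‖ ^ 2) :
    IsGLB {r : ℝ | ∃ v : V, v ≠ 0 ∧ r = L v} (min (ev k) (ev ⟨0, hn⟩ + β)) :=
  penalized_rayleigh_quotient_inf_general n hn T b ev heig hmono k β hβ L hL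
end

section
/- Let V be a finite-dimensional real inner product space of dimension n ≥ 1, let T : V → V be a self-adjoint linear map, and let (u_1, …, u_n) be an orthonormal basis of V with T u_i = λ_i u_i and λ_1 ≤ λ_2 ≤ … ≤ λ_n. Fix 1 ≤ k ≤ n and β ≥ λ_k − λ_1, and for u ≠ 0 define the penalized Rayleigh quotient L_k(u) = ⟨T u, u⟩/‖u‖² + β Σ_{j=1}^{k−1} ⟨u, u_j⟩²/‖u‖². Then L_k(u) ≥ λ_k for every nonzero u ∈ V, and L_k(u_k) = λ_k; hence the minimum of L_k over nonzero vectors equals λ_k and is attained at the k-th eigenvector u_k. -/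
/-!
In the eigenbasis, `⟪T v, v⟫ + β ∑_{j<k} ⟪v, b j⟫²` is a weighted sum of the squared coordinates
of `v`, with weight `ev i + β ≥ ev 0 + β ≥ ev k` for `i < k` and `ev i ≥ ev k` for `i ≥ k`.
Hence it dominates `ev k ‖v‖²`, with equality at `v = b k`.
-/

open Finset

open scoped RealInnerProductSpace

theorem mul_sum_sq_le_sum_mul_sq_add_mul_sum_sq {ι : Type*} [Fintype ι] [DecidableEq ι]
    (s : Finset ι) (w c : ι → ℝ) {m β : ℝ}
    (hs : ∀ i ∈ s, m ≤ w i + β) (hsc : ∀ i ∉ s, m ≤ w i) :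
    m * ∑ i, c i ^ 2 ≤ ∑ i, w i * c i ^ 2 + β * ∑ i ∈ s, c i ^ 2 := by
  rw [← sum_add_sum_compl s, ← sum_add_sum_compl s (fun i ↦ w i * c i ^ 2), mul_add,
    mul_sum, mul_sum, mul_sum]
  have hin : ∑ i ∈ s, m * c i ^ 2 ≤ ∑ i ∈ s, (w i * c i ^ 2 + β * c i ^ 2) :=
    sum_le_sum fun i hi ↦ by nlinarith [hs i hi, sq_nonneg (c i)]
  have hout : ∑ i ∈ sᶜ, m * c i ^ 2 ≤ ∑ i ∈ sᶜ, w i * c i ^ 2 :=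
    sum_le_sum fun i hi ↦ by nlinarith [hsc i (mem_compl.mp hi), sq_nonneg (c i)]
  rw [sum_add_distrib] at hin
  linarith

namespace OrthonormalBasis

variable {ι V : Type*} [Fintype ι] [NormedAddCommGroup V] [InnerProductSpace ℝ V]

theorem inner_map_self_eq_sum_mul_inner_sq (b : OrthonormalBasis ι ℝ V) {T : V →ₗ[ℝ] V}
    (hT : ∀ w v, ⟪T w, v⟫ = ⟪w, T v⟫) {ev : ι → ℝ} (heig : ∀ i, T (b i) = ev i • b i) (v : V) :
    ⟪T v, v⟫ = ∑ i, ev i * ⟪v, b i⟫ ^ 2 := by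
  rw [← b.sum_inner_mul_inner (T v) v]
  refine sum_congr rfl fun i _ ↦ ?_
  rw [hT, heig, real_inner_smul_right, real_inner_comm (b i) v]
  ring

theorem le_penalized_rayleigh_quotient [DecidableEq ι] (b : OrthonormalBasis ι ℝ V)
    {T : V →ₗ[ℝ] V} (hT : ∀ w v, ⟪T w, v⟫ = ⟪w, T v⟫) {ev : ι → ℝ}
    (heig : ∀ i, T (b i) = ev i • b i) (s : Finset ι) {m β : ℝ}
    (hs : ∀ i ∈ s, m ≤ ev i + β) (hsc : ∀ i ∉ s, m ≤ ev i) {v : V} (hv : v ≠ 0) :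
    m ≤ ⟪T v, v⟫ / ‖v‖ ^ 2 + β * ∑ j ∈ s, ⟪v, b j⟫ ^ 2 / ‖v‖ ^ 2 := by
  have hpos : 0 < ‖v‖ ^ 2 := by positivity
  rw [← sum_div, mul_div_assoc', ← add_div, le_div_iff₀ hpos,
    b.inner_map_self_eq_sum_mul_inner_sq hT heig, ← b.sum_sq_inner_left]
  exact mul_sum_sq_le_sum_mul_sq_add_mul_sum_sq s ev _ hs hsc

theorem penalized_rayleigh_quotient_eq (b : OrthonormalBasis ι ℝ V)
    {T : V →ₗ[ℝ] V} {ev : ι → ℝ} (heig : ∀ i, T (b i) = ev i • b i) (β : ℝ) {s : Finset ι}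
    {k : ι} (hk : k ∉ s) :
    ⟪T (b k), b k⟫ / ‖b k‖ ^ 2 + β * ∑ j ∈ s, ⟪b k, b j⟫ ^ 2 / ‖b k‖ ^ 2 = ev k := by
  have hpenalty : ∑ j ∈ s, ⟪b k, b j⟫ ^ 2 / ‖b k‖ ^ 2 = 0 :=
    sum_eq_zero fun j hj ↦ by rw [b.inner_eq_zero (ne_of_mem_of_not_mem hj hk).symm]; simp
  rw [hpenalty, mul_zero, add_zero]
  simp [heig, real_inner_smul_left]

end OrthonormalBasis

theorem penalized_rayleigh_quotient_min_attained_general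
    {V : Type*} [NormedAddCommGroup V] [InnerProductSpace ℝ V]
    (n : ℕ) (hn : 0 < n)
    (T : V →ₗ[ℝ] V)
    (hT : ∀ w v : V, (inner ℝ (T w) v : ℝ) = (inner ℝ w (T v) : ℝ))
    (b : OrthonormalBasis (Fin n) ℝ V) (ev : Fin n → ℝ)
    (heig : ∀ i, T (b i) = ev i • b i) (hmono : Monotone ev)
    (k : Fin n) (β : ℝ) (hβ : ev k - ev ⟨0, hn⟩ ≤ β)
    (L : V → ℝ)
    (hL : ∀ v, L v = (inner ℝ (T v) v : ℝ) / ‖v‖ ^ 2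
        + β * ∑ j ∈ Finset.Iio k, (inner ℝ v (b j) : ℝ) ^ 2 / ‖v‖ ^ 2) :
    (∀ v : V, v ≠ 0 → ev k ≤ L v) ∧ L (b k) = ev k := by
  have hbelow : ∀ i ∈ Iio k, ev k ≤ ev i + β := fun i _ ↦ by
    have : ev ⟨0, hn⟩ ≤ ev i := hmono (Nat.zero_le i.val)
    linarith
  have habove : ∀ i ∉ Iio k, ev k ≤ ev i := fun i hi ↦ hmono (not_lt.mp (by simpa using hi))
  refine ⟨fun v hv ↦ ?_, ?_⟩
  · rw [hL]
    exact b.le_penalized_rayleigh_quotient hT heig _ hbelow habove hv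
  · rw [hL]
    exact b.penalized_rayleigh_quotient_eq heig β (by simp)

/-- For a self-adjoint operator `T` with orthonormal eigenbasis `b` and increasing
eigenvalues `ev`, if the penalty parameter satisfies `β ≥ ev k - ev 0`, then the
penalized Rayleigh quotient `L_k(v) = ⟨Tv,v⟩/‖v‖² + β ∑_{j<k} ⟨v, b j⟫²/‖v‖²` is
bounded below by `ev k` on nonzero vectors, and attains the value `ev k` at the `k`-th
eigenvector `b k`. -/
theorem penalized_rayleigh_quotient_min_attained
    {V : Type*} [NormedAddCommGroup V] [InnerProductSpace ℝ V]
    [FiniteDimensional ℝ V]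
    (n : ℕ) (hn : 0 < n) (hdim : Module.finrank ℝ V = n)
    (T : V →ₗ[ℝ] V)
    (hT : ∀ w v : V, (inner ℝ (T w) v : ℝ) = (inner ℝ w (T v) : ℝ))
    (b : OrthonormalBasis (Fin n) ℝ V) (ev : Fin n → ℝ)
    (heig : ∀ i, T (b i) = ev i • b i) (hmono : Monotone ev)
    (k : Fin n) (β : ℝ) (hβ : ev k - ev ⟨0, hn⟩ ≤ β)
    (L : V → ℝ)
    (hL : ∀ v, L v = (inner ℝ (T v) v : ℝ) / ‖v‖ ^ 2
        + β * ∑ j ∈ Finset.Iio k, (inner ℝ v (b j) : ℝ) ^ 2 / ‖v‖ ^ 2) :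
    (∀ v : V, v ≠ 0 → ev k ≤ L v) ∧ L (b k) = ev k :=
  penalized_rayleigh_quotient_min_attained_general n hn T hT b ev heig hmono k β hβ L hL
end
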